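/- For every variable z and all terms M, N in Λ↑: if db_z(M) = db_z(N) then M =α N. -/
import Mathlib


/-- Terms of Λ↑: variables, application, named abstraction, explicit weakening. -/
inductive Tm : Type
  | var : ℕ → Tm
  | app : Tm → Tm → Tm
  | lam : ℕ → Tm → Tm
  | up  : Tm → Tm

/-- Renaming functions: `swap y x` is `{yx}`, `lift F x` is `F_x`. -/
inductive Ren : Type
  | swap : ℕ → ℕ → Ren
  | lift : Ren → ℕ → Ren

/-- Action of a renaming function on a term. -/
def Ren.apply : Ren → Tm → Tm
  | F, .app M N => .app (F.apply M) (F.apply N)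
  | F, .lam x M => .lam x ((F.lift x).apply M)
  | .lift F _, .up M => .up (F.apply M)
  | .lift F x, .var z => if z = x then .var x else .up (F.apply (.var z))
  | .swap _ _, .up M => .up M
  | .swap y x, .var z => if z = x then .var y else .up (.var z)
termination_by F M => (sizeOf M, sizeOf F)

/-- Iterated lifting `F_Γ` for a context `Γ = y₁,…,yₙ` (the list `[y₁,…,yₙ]`):
lift by `y₁` first, then `y₂`, …, then `yₙ`. -/
def Ren.liftCtx (F : Ren) (Γ : List ℕ) : Ren := Γ.foldl Ren.lift F

/-- Alpha-conversion: smallest compatible equivalence with `λx M =α λy {yx}M`. -/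
inductive Alpha : Tm → Tm → Prop
  | refl (M) : Alpha M M
  | symm {M N} : Alpha M N → Alpha N M
  | trans {M N P} : Alpha M N → Alpha N P → Alpha M P
  | app {M₁ M₂ N₁ N₂} : Alpha M₁ M₂ → Alpha N₁ N₂ → Alpha (.app M₁ N₁) (.app M₂ N₂)
  | lam {M₁ M₂} (x) : Alpha M₁ M₂ → Alpha (.lam x M₁) (.lam x M₂)
  | up {M₁ M₂} : Alpha M₁ M₂ → Alpha (.up M₁) (.up M₂)
  | rename (x y M) : Alpha (.lam x M) (.lam y ((Ren.swap y x).apply M))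

/-- de Bruijn normalisation `db_z : Λ↑ → Λ↑`. -/
def db (z : ℕ) : Tm → Tm
  | .var x => .var x
  | .up M => .up (db z M)
  | .app M N => .app (db z M) (db z N)
  | .lam x M => .lam z ((Ren.swap z x).apply (db z M))
/-- Derivations of judgments `Γ ⊢ M`.  A context `Γ = y₁,…,yₙ` is the list
`[y₁,…,yₙ]` and `Γ,x` is `Γ ++ [x]`. -/
inductive Der : List ℕ → Tm → Type
  | varNil (x : ℕ) : Der [] (.var x)
  | varHere (Γ : List ℕ) (x : ℕ) : Der (Γ ++ [x]) (.var x)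
  | varThere {Γ : List ℕ} {x : ℕ} (z : ℕ) : z ≠ x → Der Γ (.var x) → Der (Γ ++ [z]) (.var x)
  | app {Γ M N} : Der Γ M → Der Γ N → Der Γ (.app M N)
  | upNil {M} : Der [] M → Der [] (.up M)
  | upCons {Γ M} (x : ℕ) : Der Γ M → Der (Γ ++ [x]) (.up M)
  | lam {Γ M} (x : ℕ) : Der (Γ ++ [x]) M → Der Γ (.lam x M)

/-- Generalized de Bruijn terms. -/
inductive Db : Type
  | var : ℕ → Db
  | one : Db
  | app : Db → Db → Db
  | lam : Db → Db
  | up  : Db → Db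

/-- Auxiliary translation, with the context given in *reversed* order
(head of the list is the last variable of the context). -/
def transAux : List ℕ → Tm → Db
  | Γ, .app M N => .app (transAux Γ M) (transAux Γ N)
  | Γ, .lam x M => .lam (transAux (x :: Γ) M)
  | [], .var x => .var x
  | y :: Γ, .var x => if y = x then .one else .up (transAux Γ (.var x))
  | [], .up M => .up (transAux [] M)
  | _ :: Γ, .up M => .up (transAux Γ M)
termination_by Γ M => (sizeOf M, Γ.length)

/-- The translation `‖Γ ⊢ M‖`, with `Γ = y₁,…,yₙ` given as the list `[y₁,…,yₙ]`. -/
def transl (Γ : List ℕ) (M : Tm) : Db := transAux Γ.reverse M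

/-- The map `db_z` from generalized de Bruijn terms back to `Λ↑`. -/
def dbD (z : ℕ) : Db → Tm
  | .var x => .var x
  | .one => .var z
  | .lam A => .lam z (dbD z A)
  | .app A B => .app (dbD z A) (dbD z B)
  | .up A => .up (dbD z A)

/-- The function `{z/Γ}`, with `Γ = y₁,…,yₙ` given as the list `[y₁,…,yₙ]`:
`{z/nil}M = M` and `{z/x,Δ}M = {z/Δ}({zx}_Δ M)`. -/
def subAll (z : ℕ) : List ℕ → Tm → Tm
  | [], M => M
  | x :: Δ, M => subAll z Δ (((Ren.swap z x).liftCtx Δ).apply M)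

lemma apply_app (F : Ren) (M N : Tm) :
    F.apply (.app M N) = .app (F.apply M) (F.apply N) := by
  cases F <;> simp [Ren.apply]

lemma apply_lam (F : Ren) (x : ℕ) (M : Tm) :
    F.apply (.lam x M) = .lam x ((F.lift x).apply M) := by
  cases F <;> simp [Ren.apply]

lemma lift_up (F : Ren) (x : ℕ) (M : Tm) :
    (F.lift x).apply (.up M) = .up (F.apply M) := by
  simp [Ren.apply]

lemma lift_var (F : Ren) (x v : ℕ) :
    (F.lift x).apply (.var v) = if v = x then .var x else .up (F.apply (.var v)) := by
  simp [Ren.apply]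

lemma swap_up (y x : ℕ) (M : Tm) : (Ren.swap y x).apply (.up M) = .up M := by
  simp [Ren.apply]

lemma swap_var (y x v : ℕ) :
    (Ren.swap y x).apply (.var v) = if v = x then .var y else .up (.var v) := by
  simp [Ren.apply]

lemma liftCtx_append (F : Ren) (Γ : List ℕ) (w : ℕ) :
    F.liftCtx (Γ ++ [w]) = (F.liftCtx Γ).lift w := by
  simp [Ren.liftCtx]

lemma liftCtx_nil (F : Ren) : F.liftCtx [] = F := rfl

lemma renComm (F : Ren) (x y : ℕ) :
    ∀ (M : Tm) (Γ : List ℕ),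
      ((Ren.swap y x).liftCtx Γ).apply (((F.lift x).liftCtx Γ).apply M)
        = ((F.lift y).liftCtx Γ).apply (((Ren.swap y x).liftCtx Γ).apply M) := by
  intro M
  induction M with
  | app M N ihM ihN =>
      intro Γ; simp [apply_app, ihM, ihN]
  | lam w M ih =>
      intro Γ
      simp only [apply_lam, ← liftCtx_append]
      rw [ih]
  | var v =>
      intro Γ
      induction Γ using List.reverseRecOn with
      | nil =>
          simp only [liftCtx_nil, lift_var, swap_var]
          by_cases h : v = x
          · subst h
            simp [swap_var, lift_var]
          · simp [h, lift_var, swap_up, swap_var, lift_up]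
      | append_singleton Γ w ih =>
          simp only [liftCtx_append, lift_var]
          by_cases h : v = w
          · subst h; simp [lift_var]
          · simp [h, lift_up, ih]
  | up M ih =>
      intro Γ
      induction Γ using List.reverseRecOn with
      | nil =>
          simp [liftCtx_nil, lift_up, swap_up]
      | append_singleton Γ w ihΓ =>
          simp [liftCtx_append, lift_up, ih]

lemma alpha_ren (F : Ren) {M N : Tm} (h : Alpha M N) :
    Alpha (F.apply M) (F.apply N) := by
  induction h generalizing F with
  | refl M => exact .refl _
  | symm _ ih => exact .symm (ih F)
  | trans _ _ ih₁ ih₂ => exact .trans (ih₁ F) (ih₂ F)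
  | app _ _ ih₁ ih₂ => rw [apply_app, apply_app]; exact .app (ih₁ F) (ih₂ F)
  | lam x _ ih => rw [apply_lam, apply_lam]; exact .lam x (ih _)
  | up h ih =>
      cases F with
      | swap a b => rw [swap_up, swap_up]; exact .up h
      | lift G w => rw [lift_up, lift_up]; exact .up (ih G)
  | rename x y M =>
      rw [apply_lam, apply_lam]
      have h := Alpha.rename x y ((F.lift x).apply M)
      have e := renComm F x y M []
      simp only [liftCtx_nil] at e
      rwa [e] at h

lemma alpha_db (z : ℕ) : ∀ M : Tm, Alpha M (db z M) := by
  intro M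
  induction M with
  | var v => exact .refl _
  | app M N ihM ihN => exact .app ihM ihN
  | up M ih => exact .up ih
  | lam x M ih =>
      have h₁ : Alpha (Tm.lam x M) (Tm.lam z ((Ren.swap z x).apply M)) :=
        Alpha.rename x z M
      have h₂ : Alpha ((Ren.swap z x).apply M) ((Ren.swap z x).apply (db z M)) :=
        alpha_ren _ ih
      exact .trans h₁ (.lam z h₂)

/-- if `db_z(M) = db_z(N)` then `M =α N`. -/
theorem stmt6 (z : ℕ) (M N : Tm) (h : db z M = db z N) : Alpha M N := by
  exact .trans (alpha_db z M) (h ▸ .symm (alpha_db z N))
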